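/- arXiv:2209.06489 — 4 statements merged into one kernel-verified Lean document; each statement's English description precedes it below -/
import Mathlib

section
/- Let α : ℝ≥0 → ℝ≥0 be continuous and positive definite (α(0)=0 and α(s)>0 for s>0). Then there exists a class KL function β_α (continuous in both arguments, β_α(·,t) strictly increasing with β_α(0,t)=0 for each t, β_α(s,·) nonincreasing and tending to 0 as t→∞) such that: for any T ∈ (0,∞], any continuous nonnegative function y : [0,T) → ℝ≥0 satisfying the upper-right Dini derivative inequality D⁺y(t) ≤ −α(y(t)) for all t ∈ [0,T), one has y(t) ≤ β_α(y(0), t) for all t ∈ [0,T). -/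
open Filter Topology Set MeasureTheory
open scoped NNReal ENNReal

/-- Upper right-hand Dini derivative (with values in the extended reals). -/
noncomputable def dini (y : ℝ → ℝ) (t : ℝ) : EReal :=
  Filter.limsup (fun h : ℝ => (((y (t + h) - y t) / h : ℝ) : EReal)) (𝓝[>] (0 : ℝ))

/-- Class KL functions. -/
def ClassKL (β : ℝ≥0 → ℝ≥0 → ℝ≥0) : Prop :=
  Continuous (fun p : ℝ≥0 × ℝ≥0 => β p.1 p.2) ∧
  (∀ t : ℝ≥0, StrictMono (fun s => β s t) ∧ β 0 t = 0) ∧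
  (∀ s : ℝ≥0, Antitone (β s) ∧ Filter.Tendsto (β s) Filter.atTop (𝓝 0))


/-!
Put `g u = min (α u) u` and `Φ s = ∫₁ˢ du / g u`. Since `0 < g u ≤ u`, `Φ` is an increasing
bijection `(0, ∞) → ℝ`, and `β (s, t) = Φ⁻¹ (Φ s - t)`, the flow of `ż = -g z`, is of class KL.
Along a trajectory, `D⁺y ≤ -α y ≤ -g y` and the chain rule for Dini derivatives give
`D⁺(Φ ∘ y) ≤ -1` as long as `y > 0`, hence `Φ (y t) ≤ Φ (y 0) - t`, i.e. `y t ≤ β (y 0, t)`.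
-/
section Dini

variable {y : ℝ → ℝ} {x : ℝ}

lemma eventually_slope_lt_of_dini_lt {r : ℝ} (h : dini y x < r) :
    ∀ᶠ z in 𝓝[>] x, slope y x z < r := by
  have hmap : map (x + ·) (𝓝[>] (0 : ℝ)) = 𝓝[>] x := by simp
  rw [← hmap, eventually_map]
  filter_upwards [eventually_lt_of_limsup_lt h] with h hh
  rw [slope_def_field, add_sub_cancel_left]
  exact_mod_cast hh

lemma antitoneOn_of_dini_nonpos {s : Set ℝ} (hs : s.OrdConnected) (hy : ContinuousOn y s)
    (hd : ∀ x ∈ s, dini y x ≤ 0) : AntitoneOn y s := by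
  intro a ha b hb hab
  have hsub : Icc a b ⊆ s := hs.out ha hb
  refine image_le_of_liminf_slope_right_le_deriv_boundary (hy.mono hsub) (B := fun _ => y a)
    le_rfl continuousOn_const (fun x _ => hasDerivWithinAt_const x _ (y a))
    (fun x hx r hr => ?_) ⟨hab, le_rfl⟩
  refine (eventually_slope_lt_of_dini_lt ?_).frequently
  exact (hd x (hsub (Ico_subset_Icc_self hx))).trans_lt (by exact_mod_cast hr)

lemma slope_comp_of_ne {Φ : ℝ → ℝ} {z : ℝ} (h : y z ≠ y x) :
    slope (Φ ∘ y) x z = slope Φ (y x) (y z) * slope y x z := by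
  simp only [slope_def_field, Function.comp]
  rw [div_mul_div_comm, mul_comm, mul_div_mul_left _ _ (sub_ne_zero.2 h)]

lemma eventually_slope_comp_lt {Φ : ℝ → ℝ} {φ c r : ℝ} (hΦ : HasDerivAt Φ φ (y x))
    (hφ : 0 < φ) (hy : ContinuousWithinAt y (Ioi x) x) (hc : c < 0) (hd : dini y x ≤ c)
    (hr : φ * c < r) : ∀ᶠ z in 𝓝[>] x, slope (Φ ∘ y) x z < r := by
  obtain ⟨r', hcr', hr'⟩ : ∃ r', c < r' ∧ r' < min (r / φ) 0 :=
    exists_between (lt_min ((lt_div_iff₀ hφ).2 (by linarith)) hc)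
  have hr'0 : r' < 0 := hr'.trans_le (min_le_right _ _)
  have hφr' : φ * r' < r := by
    have := (lt_div_iff₀ hφ).1 (hr'.trans_le (min_le_left _ _)); linarith
  have hslopeΦ : ∀ᶠ w in 𝓝[≠] y x, max (r / r') 0 < slope Φ (y x) w :=
    hΦ.tendsto_slope.eventually
      (lt_mem_nhds (max_lt ((div_lt_iff_of_neg hr'0).2 hφr') hφ))
  have hslopeΦ' : ∀ᶠ z in 𝓝[>] x, y z ≠ y x → max (r / r') 0 < slope Φ (y x) (y z) :=
    hy.eventually (eventually_nhdsWithin_iff.1 hslopeΦ)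
  have hslope_y : ∀ᶠ z in 𝓝[>] x, slope y x z < r' :=
    eventually_slope_lt_of_dini_lt (hd.trans_lt (by exact_mod_cast hcr'))
  filter_upwards [hslopeΦ', hslope_y, self_mem_nhdsWithin] with z hΦz hyz hxz
  have hne : y z ≠ y x := by
    intro heq
    rw [slope_def_field, heq, sub_self, zero_div] at hyz
    linarith
  obtain ⟨h1, h2⟩ := max_lt_iff.1 (hΦz hne)
  rw [slope_comp_of_ne hne]
  have := (div_lt_iff_of_neg hr'0).1 h1
  nlinarith

end Dini

noncomputable def potential (g : ℝ → ℝ) (s : ℝ) : ℝ := ∫ u in (1 : ℝ)..s, (g u)⁻¹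

section Potential

variable {g : ℝ → ℝ}

lemma hasDerivAt_potential (hg : ContinuousOn g (Ioi 0)) (hgpos : ∀ u, 0 < u → 0 < g u)
    {s : ℝ} (hs : 0 < s) : HasDerivAt (potential g) (g s)⁻¹ s := by
  have hinv : ContinuousOn (fun u => (g u)⁻¹) (Ioi 0) := hg.inv₀ fun u hu => (hgpos u hu).ne'
  refine intervalIntegral.integral_hasDerivAt_right ?_
    (hinv.stronglyMeasurableAtFilter isOpen_Ioi s hs) (hinv.continuousAt (Ioi_mem_nhds hs))
  exact (hinv.mono fun u hu => (lt_min one_pos hs).trans_le hu.1).intervalIntegrable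

lemma continuousOn_potential (hg : ContinuousOn g (Ioi 0)) (hgpos : ∀ u, 0 < u → 0 < g u) :
    ContinuousOn (potential g) (Ioi 0) := fun _ hs =>
  (hasDerivAt_potential hg hgpos hs).continuousAt.continuousWithinAt

lemma strictMonoOn_potential (hg : ContinuousOn g (Ioi 0)) (hgpos : ∀ u, 0 < u → 0 < g u) :
    StrictMonoOn (potential g) (Ioi 0) := by
  refine strictMonoOn_of_deriv_pos (convex_Ioi 0) (continuousOn_potential hg hgpos)
    fun s hs => ?_
  rw [interior_Ioi] at hs
  rw [(hasDerivAt_potential hg hgpos hs).deriv]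
  exact inv_pos.2 (hgpos s hs)

lemma monotoneOn_potential_sub_log (hg : ContinuousOn g (Ioi 0))
    (hgpos : ∀ u, 0 < u → 0 < g u) (hgle : ∀ u, 0 < u → g u ≤ u) :
    MonotoneOn (fun s => potential g s - Real.log s) (Ioi 0) := by
  have hderiv : ∀ s ∈ Ioi (0 : ℝ),
      HasDerivAt (fun s => potential g s - Real.log s) ((g s)⁻¹ - s⁻¹) s := fun s hs =>
    (hasDerivAt_potential hg hgpos hs).sub (Real.hasDerivAt_log (ne_of_gt hs))
  refine monotoneOn_of_deriv_nonneg (convex_Ioi 0)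
    (fun s hs => (hderiv s hs).continuousAt.continuousWithinAt)
    (fun s hs => ?_) fun s hs => ?_ <;> rw [interior_Ioi] at hs
  · exact (hderiv s hs).differentiableAt.differentiableWithinAt
  · rw [(hderiv s hs).deriv, sub_nonneg]
    exact inv_anti₀ (hgpos s hs) (hgle s hs)

lemma surjOn_potential (hg : ContinuousOn g (Ioi 0)) (hgpos : ∀ u, 0 < u → 0 < g u)
    (hgle : ∀ u, 0 < u → g u ≤ u) : SurjOn (potential g) (Ioi 0) univ := by
  intro x _
  set c := Real.exp (x - potential g 1)
  have hc : 0 < c := Real.exp_pos _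
  have hlog : Real.log c = x - potential g 1 := Real.log_exp _
  have hmono := monotoneOn_potential_sub_log hg hgpos hgle
  have h1 : (1 : ℝ) ∈ Ioi 0 := mem_Ioi.2 one_pos
  have hlo : potential g (min 1 c) ≤ x := by
    have hΦ := hmono (lt_min one_pos hc) h1 (min_le_left _ _)
    have hlog' := Real.log_le_log (lt_min one_pos hc) (min_le_right 1 c)
    simp only [Real.log_one, sub_zero] at hΦ
    linarith
  have hhi : x ≤ potential g (max 1 c) := by
    have hΦ := hmono h1 (one_pos.trans_le (le_max_left 1 c)) (le_max_left _ _)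
    have hlog' := Real.log_le_log hc (le_max_right 1 c)
    simp only [Real.log_one, sub_zero] at hΦ
    linarith
  have hsub : Icc (min 1 c) (max 1 c) ⊆ Ioi 0 := fun u hu => (lt_min one_pos hc).trans_le hu.1
  obtain ⟨u, hu, hux⟩ := intermediate_value_Icc min_le_max
    ((continuousOn_potential hg hgpos).mono hsub) ⟨hlo, hhi⟩
  exact ⟨u, hsub hu, hux⟩

noncomputable def potentialOrderIso (hg : ContinuousOn g (Ioi 0))
    (hgpos : ∀ u, 0 < u → 0 < g u) (hgle : ∀ u, 0 < u → g u ≤ u) : Ioi (0 : ℝ) ≃o ℝ :=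
  StrictMono.orderIsoOfSurjective (fun u => potential g u)
    (fun u v huv => strictMonoOn_potential hg hgpos u.2 v.2 huv) fun x => by
      obtain ⟨u, hu, hux⟩ := surjOn_potential hg hgpos hgle (mem_univ x)
      exact ⟨⟨u, hu⟩, hux⟩

lemma potential_le_sub_of_dini_le {y : ℝ → ℝ} (hg : ContinuousOn g (Ioi 0))
    (hgpos : ∀ u, 0 < u → 0 < g u) {a b : ℝ} (hab : a ≤ b) (hy : ContinuousOn y (Icc a b))
    (hypos : ∀ x ∈ Icc a b, 0 < y x) (hd : ∀ x ∈ Ico a b, dini y x ≤ ((-g (y x) : ℝ) : EReal)) :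
    potential g (y b) ≤ potential g (y a) - (b - a) := by
  have hΦ : ∀ x ∈ Icc a b, HasDerivAt (potential g) (g (y x))⁻¹ (y x) := fun x hx =>
    hasDerivAt_potential hg hgpos (hypos x hx)
  refine image_le_of_liminf_slope_right_le_deriv_boundary (f := potential g ∘ y)
    (B := fun x => potential g (y a) - (x - a)) (B' := fun _ => -1)
    (fun x hx => (hΦ x hx).continuousAt.comp_continuousWithinAt (hy x hx)) (by simp)
    (by fun_prop) (fun x _ => by simpa using ((hasDerivWithinAt_id x _).sub_const a).const_sub _)
    (fun x hxo r hr => ?_) ⟨hab, le_rfl⟩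
  have hx : x ∈ Icc a b := Ico_subset_Icc_self hxo
  have hgx := hgpos _ (hypos x hx)
  refine (eventually_slope_comp_lt (hΦ x hx) (inv_pos.2 hgx)
    ((hy x hx).mono_of_mem_nhdsWithin (Icc_mem_nhdsGT_of_mem hxo)) (neg_neg_of_pos hgx)
    (hd x hxo) ?_).frequently
  rwa [mul_neg, inv_mul_cancel₀ hgx.ne']

end Potential

noncomputable def klOfOrderIso (e : Ioi (0 : ℝ) ≃o ℝ) (Φ : ℝ → ℝ) (s t : ℝ≥0) : ℝ≥0 :=
  (if 0 < s then (e.symm (Φ s - t) : ℝ) else 0).toNNReal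

section KL

variable (e : Ioi (0 : ℝ) ≃o ℝ) {Φ : ℝ → ℝ}

lemma klOfOrderIso_zero_left (t : ℝ≥0) : klOfOrderIso e Φ 0 t = 0 := by
  simp [klOfOrderIso]

lemma coe_klOfOrderIso_of_pos {s : ℝ≥0} (hs : 0 < s) (t : ℝ≥0) :
    (klOfOrderIso e Φ s t : ℝ) = e.symm (Φ s - t) := by
  rw [klOfOrderIso, if_pos hs, Real.coe_toNNReal _ (e.symm _).2.le]

variable {e}

lemma coe_symm_apply_of_extends (he : ∀ u : Ioi (0 : ℝ), e u = Φ u) {s : ℝ} (hs : 0 < s) :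
    (e.symm (Φ s) : ℝ) = s := by
  rw [← he ⟨s, hs⟩, e.symm_apply_apply]

lemma continuousOn_Ioi_of_extends (he : ∀ u : Ioi (0 : ℝ), e u = Φ u) :
    ContinuousOn Φ (Ioi 0) := by
  rw [continuousOn_iff_continuous_domRestrict]
  convert e.continuous using 1
  exact funext fun u => (he u).symm

lemma klOfOrderIso_le (he : ∀ u : Ioi (0 : ℝ), e u = Φ u) (s t : ℝ≥0) :
    klOfOrderIso e Φ s t ≤ s := by
  rcases eq_zero_or_pos s with rfl | hs
  · rw [klOfOrderIso_zero_left]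
  rw [← NNReal.coe_le_coe, coe_klOfOrderIso_of_pos e hs]
  calc (e.symm (Φ s - t) : ℝ) ≤ e.symm (Φ s) := e.symm.monotone (sub_le_self _ t.2)
    _ = s := coe_symm_apply_of_extends he (NNReal.coe_pos.2 hs)

lemma continuous_klOfOrderIso (he : ∀ u : Ioi (0 : ℝ), e u = Φ u) :
    Continuous fun p : ℝ≥0 × ℝ≥0 => klOfOrderIso e Φ p.1 p.2 := by
  rw [continuous_iff_continuousAt]
  rintro ⟨s, t⟩
  rcases eq_zero_or_pos s with rfl | hs
  · have hfst : Tendsto (fun p : ℝ≥0 × ℝ≥0 => p.1) (𝓝 (0, t)) (𝓝 0) :=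
      continuous_fst.tendsto (0, t)
    rw [ContinuousAt, klOfOrderIso_zero_left]
    exact tendsto_of_tendsto_of_tendsto_of_le_of_le tendsto_const_nhds hfst
      (fun _ => bot_le) fun p => klOfOrderIso_le he p.1 p.2
  · have hΦ : ContinuousAt Φ s :=
      (continuousOn_Ioi_of_extends he).continuousAt (Ioi_mem_nhds (NNReal.coe_pos.2 hs))
    have hcont :
        ContinuousAt (fun p : ℝ≥0 × ℝ≥0 => (e.symm (Φ p.1 - p.2) : ℝ).toNNReal) (s, t) := by
      refine continuous_real_toNNReal.continuousAt.comp ?_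
      refine continuous_subtype_val.continuousAt.comp (e.symm.continuous.continuousAt.comp ?_)
      exact (hΦ.comp (x := (s, t)) (by fun_prop)).sub (by fun_prop)
    refine hcont.congr ?_
    filter_upwards [continuous_fst.continuousAt.eventually (eventually_gt_nhds hs)] with p hp
    simp only [klOfOrderIso, if_pos hp]

theorem classKL_klOfOrderIso (he : ∀ u : Ioi (0 : ℝ), e u = Φ u) :
    ClassKL (klOfOrderIso e Φ) := by
  refine ⟨continuous_klOfOrderIso he, fun t => ⟨fun s₁ s₂ hs =>
    show klOfOrderIso e Φ s₁ t < klOfOrderIso e Φ s₂ t from ?_, klOfOrderIso_zero_left e t⟩,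
    fun s => ⟨fun t₁ t₂ ht => ?_, ?_⟩⟩
  · have hs₂ : 0 < s₂ := hs.bot_lt
    rcases eq_zero_or_pos s₁ with rfl | hs₁
    · rw [klOfOrderIso_zero_left, ← NNReal.coe_pos, coe_klOfOrderIso_of_pos e hs₂]
      exact (e.symm _).2
    · rw [← NNReal.coe_lt_coe, coe_klOfOrderIso_of_pos e hs₁, coe_klOfOrderIso_of_pos e hs₂]
      have hΦ : Φ s₁ < Φ s₂ := by
        rw [← he ⟨s₁, NNReal.coe_pos.2 hs₁⟩, ← he ⟨s₂, NNReal.coe_pos.2 hs₂⟩]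
        exact e.strictMono hs
      exact e.symm.strictMono (sub_lt_sub_right hΦ _)
  · rcases eq_zero_or_pos s with rfl | hs
    · rw [klOfOrderIso_zero_left, klOfOrderIso_zero_left]
    rw [← NNReal.coe_le_coe, coe_klOfOrderIso_of_pos e hs, coe_klOfOrderIso_of_pos e hs]
    exact e.symm.monotone (sub_le_sub_left (NNReal.coe_le_coe.2 ht) _)
  · rcases eq_zero_or_pos s with rfl | hs
    · exact tendsto_const_nhds.congr fun t => (klOfOrderIso_zero_left e t).symm
    rw [← NNReal.tendsto_coe]
    refine (tendsto_congr fun t => (coe_klOfOrderIso_of_pos e hs t).symm).1 ?_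
    have hlim : Tendsto (fun t : ℝ≥0 => Φ s - t) atTop atBot :=
      tendsto_atBot_add_const_left _ _
        (tendsto_neg_atTop_atBot.comp (NNReal.tendsto_coe_atTop.2 tendsto_id))
    have hsymm : Tendsto (fun x => (e.symm x : ℝ)) atBot (𝓝 0) :=
      ((tendsto_Ioi_atBot (f := e.symm)).1 e.symm.tendsto_atBot).mono_right nhdsWithin_le_nhds
    exact hsymm.comp hlim

end KL

theorem stmt0_general (α : ℝ≥0 → ℝ≥0) (hαc : Continuous α)
    (hαpos : ∀ s : ℝ≥0, 0 < s → 0 < α s) :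
    ∃ β : ℝ≥0 → ℝ≥0 → ℝ≥0, ClassKL β ∧
      ∀ T : ℝ≥0∞, 0 < T → ∀ y : ℝ → ℝ,
        ContinuousOn y {t : ℝ | 0 ≤ t ∧ ENNReal.ofReal t < T} →
        (∀ t ∈ {t : ℝ | 0 ≤ t ∧ ENNReal.ofReal t < T}, 0 ≤ y t) →
        (∀ t ∈ {t : ℝ | 0 ≤ t ∧ ENNReal.ofReal t < T},
          dini y t ≤ ((-(α (Real.toNNReal (y t)) : ℝ) : ℝ) : EReal)) →
        ∀ t ∈ {t : ℝ | 0 ≤ t ∧ ENNReal.ofReal t < T},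
          y t ≤ (β (Real.toNNReal (y 0)) (Real.toNNReal t) : ℝ) := by
  -- capping the rate at `u` makes `potential g` map `(0, ∞)` onto `ℝ`, so the comparison flow
  -- `e.symm (potential g s - t)` exists for all `t ≥ 0`
  set g : ℝ → ℝ := fun u => min (α u.toNNReal : ℝ) u
  have hg : ContinuousOn g (Ioi 0) := by fun_prop
  have hgpos : ∀ u, 0 < u → 0 < g u := fun u hu =>
    lt_min (NNReal.coe_pos.2 (hαpos _ (Real.toNNReal_pos.2 hu))) hu
  set e := potentialOrderIso hg hgpos fun u _ => min_le_right _ u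
  refine ⟨klOfOrderIso e (potential g), classKL_klOfOrderIso fun _ => rfl, ?_⟩
  intro T hT y hy _ hd t ht
  set D := {t : ℝ | 0 ≤ t ∧ ENNReal.ofReal t < T}
  have hD : D.OrdConnected :=
    ⟨fun a ha b hb x hx => ⟨ha.1.trans hx.1, (ENNReal.ofReal_le_ofReal hx.2).trans_lt hb.2⟩⟩
  have h0 : (0 : ℝ) ∈ D := ⟨le_rfl, by simpa using hT⟩
  have hanti : AntitoneOn y D := antitoneOn_of_dini_nonpos hD hy fun x hx =>
    (hd x hx).trans (EReal.coe_nonpos.2 (neg_nonpos.2 (α _).2))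
  rcases le_or_gt (y t) 0 with hyt | hyt
  · exact hyt.trans (NNReal.coe_nonneg _)
  have hIcc : Icc 0 t ⊆ D := hD.out h0 ht
  have hpos : ∀ x ∈ Icc 0 t, 0 < y x := fun x hx => hyt.trans_le (hanti (hIcc hx) ht hx.2)
  have hdecay := potential_le_sub_of_dini_le hg hgpos ht.1 (hy.mono hIcc) hpos fun x hx =>
    (hd x (hIcc (Ico_subset_Icc_self hx))).trans
      (EReal.coe_le_coe_iff.2 (neg_le_neg (min_le_left _ _)))
  have hy0 := hpos 0 (left_mem_Icc.2 ht.1)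
  rw [coe_klOfOrderIso_of_pos e (Real.toNNReal_pos.2 hy0), Real.coe_toNNReal _ hy0.le,
    Real.coe_toNNReal _ ht.1]
  calc y t = e.symm (potential g (y t)) := (coe_symm_apply_of_extends (fun _ => rfl) hyt).symm
    _ ≤ e.symm (potential g (y 0) - t) := e.symm.monotone (by linarith)

theorem stmt0 (α : ℝ≥0 → ℝ≥0) (hαc : Continuous α) (hα0 : α 0 = 0)
    (hαpos : ∀ s : ℝ≥0, 0 < s → 0 < α s) :
    ∃ β : ℝ≥0 → ℝ≥0 → ℝ≥0, ClassKL β ∧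
      ∀ T : ℝ≥0∞, 0 < T → ∀ y : ℝ → ℝ,
        ContinuousOn y {t : ℝ | 0 ≤ t ∧ ENNReal.ofReal t < T} →
        (∀ t ∈ {t : ℝ | 0 ≤ t ∧ ENNReal.ofReal t < T}, 0 ≤ y t) →
        (∀ t ∈ {t : ℝ | 0 ≤ t ∧ ENNReal.ofReal t < T},
          dini y t ≤ ((-(α (Real.toNNReal (y t)) : ℝ) : ℝ) : EReal)) →
        ∀ t ∈ {t : ℝ | 0 ≤ t ∧ ENNReal.ofReal t < T},
          y t ≤ (β (Real.toNNReal (y 0)) (Real.toNNReal t) : ℝ) :=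
  stmt0_general α hαc hαpos
end

section
/- Let f : C([−Δ,0],ℝⁿ) → ℝⁿ be Lipschitz on bounded sets with f(0) = 0, and let x : [−Δ, b) → ℝⁿ be a solution of ẋ(t) = f(x_t) for a.e. t ∈ [0,b) with x locally absolutely continuous on [0,b). Define, for φ ∈ C, h ∈ [0,Δ), the Driver perturbation φ_h := (θ ↦ φ(θ+h) for θ ∈ [−Δ,−h), φ(0) + (θ+h) f(φ) for θ ∈ [−h,0]). Then for each t ∈ [0,b) at which τ ↦ f(x_τ) is continuous, ‖(x_t)_h − x_{t+h}‖_∞ = o(h) as h → 0⁺. -/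
/-!
On `[-Δ, -h)` the Driver perturbation `(x_t)_h` coincides with `x_{t+h}`; on `[-h, 0]` the
error at `θ` is the first-order Taylor remainder `x t + (s - t) • f(x_t) - x s` at
`s = t + h + θ ∈ [t, t + h]`.
By the fundamental theorem of calculus, continuity of `τ ↦ f(x_τ)` at `t` makes `x`
right-differentiable at `t` with derivative `f(x_t)`, so this remainder is `o(h)` uniformly in `s`.
-/

open Filter Topology Set MeasureTheory
open scoped NNReal ENNReal

def LipOnBoundedV {n : ℕ} {Δ : ℝ}
    (f : C(Set.Icc (-Δ) (0 : ℝ), EuclideanSpace ℝ (Fin n)) → EuclideanSpace ℝ (Fin n)) :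
    Prop :=
  ∀ H > (0 : ℝ), ∃ L ≥ (0 : ℝ), ∀ φ ψ, ‖φ‖ ≤ H → ‖ψ‖ ≤ H → ‖f φ - f ψ‖ ≤ L * ‖φ - ψ‖

section

variable {E : Type*} [NormedAddCommGroup E] [NormedSpace ℝ E]

theorem hasDerivWithinAt_Ici_of_eq_add_integral [CompleteSpace E] {x g : ℝ → E} {S : Set ℝ}
    {a t : ℝ} (hS : S ∈ 𝓝[≥] t) (hint : ∀ s ∈ S, IntervalIntegrable g volume a s)
    (hsol : ∀ s ∈ S, x s = x a + ∫ τ in a..s, g τ) (hg : ContinuousWithinAt g S t) :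
    HasDerivWithinAt x (g t) (Ici t) t := by
  have ht : t ∈ S := mem_of_mem_nhdsWithin self_mem_Ici hS
  obtain ⟨u, htu : t < u, hu⟩ := mem_nhdsGE_iff_exists_Ico_subset.mp hS
  have hs : (t + u) / 2 ∈ S := hu ⟨by linarith, by linarith⟩
  have hmeas : StronglyMeasurableAtFilter g (𝓝[>] t) :=
    AEStronglyMeasurable.stronglyMeasurableAtFilter_of_mem
      ((hint t ht).symm.trans (hint _ hs)).aestronglyMeasurable (Ioc_mem_nhdsGT (by linarith))
  have hderiv := (intervalIntegral.integral_hasDerivWithinAt_right (s := Ici t) (hint t ht) hmeas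
    (hg.mono_of_mem_nhdsWithin (nhdsWithin_mono t Ioi_subset_Ici_self hS))).const_add (x a)
  exact hderiv.congr_of_eventuallyEq (eventually_of_mem hS hsol) (hsol t ht)

theorem HasDerivWithinAt.eventually_forall_Icc_norm_sub_le {x : ℝ → E} {v : E} {t : ℝ}
    (hx : HasDerivWithinAt x v (Ici t) t) {ε : ℝ} (hε : 0 < ε) :
    ∀ᶠ h in 𝓝[>] 0, ∀ s ∈ Icc t (t + h), ‖x t + (s - t) • v - x s‖ ≤ ε * h := by
  obtain ⟨u, htu : t < u, hu⟩ := mem_nhdsGE_iff_exists_Ico_subset.mp (hx.isLittleO.def hε)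
  filter_upwards [Ioo_mem_nhdsGT (sub_pos.mpr htu)] with h hh s hs
  calc ‖x t + (s - t) • v - x s‖ = ‖x s - x t - (s - t) • v‖ := by
        rw [← norm_neg]; congr 1; abel
    _ ≤ ε * ‖s - t‖ := hu ⟨hs.1, by linarith [hs.2, hh.2]⟩
    _ ≤ ε * h := by
        rw [Real.norm_of_nonneg (sub_nonneg.mpr hs.1)]
        exact mul_le_mul_of_nonneg_left (by linarith [hs.2]) hε.le

theorem iSup_norm_driver_sub_le {Δ : ℝ} {x : ℝ → E} {v : E} {t h c : ℝ} (hc : 0 ≤ c)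
    (hbound : ∀ s ∈ Icc t (t + h), ‖x t + (s - t) • v - x s‖ ≤ c) :
    (⨆ θ : Icc (-Δ) (0 : ℝ),
      ‖(if (θ : ℝ) < -h then x (t + θ + h) else x t + ((θ : ℝ) + h) • v)
        - x (t + h + θ)‖) ≤ c := by
  refine Real.iSup_le (fun θ => ?_) hc
  split_ifs with hθ
  · rw [add_right_comm, sub_self, norm_zero]
    exact hc
  · have := hbound (t + h + θ) ⟨by linarith, by linarith [θ.2.2]⟩
    rwa [show t + h + θ - t = θ + h by ring] at this

end

/-- The solution property (local absolute continuity with a.e. derivative `f(x_t)`) is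
encoded by the integral equation `hsol`. -/
theorem stmt7_general (n : ℕ) (Δ : ℝ) (b : ℝ≥0∞)
    (f : C(Set.Icc (-Δ) (0 : ℝ), EuclideanSpace ℝ (Fin n)) → EuclideanSpace ℝ (Fin n))
    (x : ℝ → EuclideanSpace ℝ (Fin n))
    (X : ℝ → C(Set.Icc (-Δ) (0 : ℝ), EuclideanSpace ℝ (Fin n)))
    (hint : ∀ t ∈ {s : ℝ | 0 ≤ s ∧ ENNReal.ofReal s < b},
      IntervalIntegrable (fun τ => f (X τ)) volume 0 t)
    (hsol : ∀ t ∈ {s : ℝ | 0 ≤ s ∧ ENNReal.ofReal s < b},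
      x t = x 0 + ∫ τ in (0:ℝ)..t, f (X τ))
    (t : ℝ) (ht : t ∈ {s : ℝ | 0 ≤ s ∧ ENNReal.ofReal s < b})
    (hcont : ContinuousWithinAt (fun τ => f (X τ)) {s : ℝ | 0 ≤ s ∧ ENNReal.ofReal s < b} t) :
    Tendsto (fun h : ℝ =>
        (⨆ θ : Set.Icc (-Δ) (0 : ℝ),
          ‖(if (θ : ℝ) < -h then x (t + θ + h) else x t + ((θ : ℝ) + h) • f (X t))
            - x (t + h + θ)‖) / h)
      (𝓝[>] (0 : ℝ)) (𝓝 0) := by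
  have hS : {s : ℝ | 0 ≤ s ∧ ENNReal.ofReal s < b} ∈ 𝓝[≥] t :=
    inter_mem (mem_of_superset self_mem_nhdsWithin fun s hs => ht.1.trans hs)
      (mem_nhdsWithin_of_mem_nhds
        ((isOpen_Iio.preimage ENNReal.continuous_ofReal).mem_nhds ht.2))
  have hderiv := hasDerivWithinAt_Ici_of_eq_add_integral hS hint hsol hcont
  refine Asymptotics.IsLittleO.tendsto_div_nhds_zero
    (Asymptotics.IsLittleO.of_bound fun ε hε => ?_)
  filter_upwards [hderiv.eventually_forall_Icc_norm_sub_le hε, self_mem_nhdsWithin]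
    with h hbound (hh : 0 < h)
  rw [Real.norm_of_nonneg (Real.iSup_nonneg fun _ => norm_nonneg _),
    Real.norm_of_nonneg hh.le]
  exact iSup_norm_driver_sub_le (by positivity) hbound

/-- The Driver perturbation `(x_t)_h` agrees with the true history `x_{t+h}` up to
`o(h)` in the sup norm, at every time `t` where `τ ↦ f(x_τ)` is continuous. The
solution property (local absolute continuity with a.e. derivative `f(x_t)`) is
encoded by the integral equation. -/
theorem stmt7 (n : ℕ) (Δ : ℝ) (hΔ : 0 < Δ) (b : ℝ≥0∞) (hb : 0 < b)
    (f : C(Set.Icc (-Δ) (0 : ℝ), EuclideanSpace ℝ (Fin n)) → EuclideanSpace ℝ (Fin n))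
    (hf0 : f 0 = 0) (hf : LipOnBoundedV f)
    (x : ℝ → EuclideanSpace ℝ (Fin n))
    (hx : ContinuousOn x {s : ℝ | -Δ ≤ s ∧ ENNReal.ofReal s < b})
    (X : ℝ → C(Set.Icc (-Δ) (0 : ℝ), EuclideanSpace ℝ (Fin n)))
    (hX : ∀ (t : ℝ) (θ : Set.Icc (-Δ) (0 : ℝ)), X t θ = x (t + θ))
    (hint : ∀ t ∈ {s : ℝ | 0 ≤ s ∧ ENNReal.ofReal s < b},
      IntervalIntegrable (fun τ => f (X τ)) volume 0 t)
    (hsol : ∀ t ∈ {s : ℝ | 0 ≤ s ∧ ENNReal.ofReal s < b},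
      x t = x 0 + ∫ τ in (0:ℝ)..t, f (X τ))
    (t : ℝ) (ht : t ∈ {s : ℝ | 0 ≤ s ∧ ENNReal.ofReal s < b})
    (hcont : ContinuousWithinAt (fun τ => f (X τ)) {s : ℝ | 0 ≤ s ∧ ENNReal.ofReal s < b} t) :
    Tendsto (fun h : ℝ =>
        (⨆ θ : Set.Icc (-Δ) (0 : ℝ),
          ‖(if (θ : ℝ) < -h then x (t + θ + h) else x t + ((θ : ℝ) + h) • f (X t))
            - x (t + h + θ)‖) / h)
      (𝓝[>] (0 : ℝ)) (𝓝 0) :=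
  stmt7_general n Δ b f x X hint hsol t ht hcont
end

section
/- Let α₂, α₃ ∈ K∞ and α₄ ∈ K, and let w : [0,b) → ℝ≥0 be continuous satisfying, for every t ∈ [0,b), D⁺w(t) ≤ −α₃(a(t)) + α₄(v), where a : [0,b) → ℝ≥0 satisfies w(t) ≤ α₂(a(t)) for all t, and v ≥ 0 is a constant. Then for every t ∈ [0,b), whenever w(t) ≥ α₂ ∘ α₃⁻¹(2 α₄(v)), it holds that D⁺w(t) ≤ −(1/2)(α₃ ∘ α₂⁻¹)(w(t)). -/
/-!
From `w ≤ α₂ a` we get `α₂⁻¹ w ≤ a`, hence `α₃ (α₂⁻¹ w) ≤ α₃ a`; the threshold on `w` gives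
`2 α₄ v ≤ α₃ (α₂⁻¹ w)`. So `-α₃ a + α₄ v ≤ -α₃ (α₂⁻¹ w) + ½ α₃ (α₂⁻¹ w)`, and the Dini bound
follows from the hypothesis on `D⁺w`.
-/

open Filter Topology Set MeasureTheory
open scoped NNReal ENNReal

/-- Class K functions. -/
def ClassK (α : ℝ≥0 → ℝ≥0) : Prop := Continuous α ∧ StrictMono α ∧ α 0 = 0

/-- Class K∞ functions. -/
def ClassKinf (α : ℝ≥0 → ℝ≥0) : Prop :=
  ClassK α ∧ Filter.Tendsto α Filter.atTop Filter.atTop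

open Function

lemma ClassKinf.surjective {α : ℝ≥0 → ℝ≥0} (h : ClassKinf α) : Surjective α := by
  obtain ⟨⟨hcont, -, hzero⟩, htop⟩ := h
  intro y
  obtain ⟨N, hN⟩ := (tendsto_atTop.1 htop y).exists
  obtain ⟨x, -, hx⟩ :=
    intermediate_value_Icc (zero_le : 0 ≤ N) hcont.continuousOn ⟨hzero.trans_le zero_le, hN⟩
  exact ⟨x, hx⟩

section InvFun

variable {X Y : Type*} [LinearOrder X] [Preorder Y] [Nonempty X] {f : X → Y}

lemma StrictMono.invFun_le_iff (hf : StrictMono f) (hs : Surjective f) {x : X} {y : Y} :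
    invFun f y ≤ x ↔ y ≤ f x := by
  rw [← hf.le_iff_le, rightInverse_invFun hs y]

lemma StrictMono.le_invFun_iff (hf : StrictMono f) (hs : Surjective f) {x : X} {y : Y} :
    x ≤ invFun f y ↔ f x ≤ y := by
  rw [← hf.le_iff_le, rightInverse_invFun hs y]

end InvFun

lemma neg_add_le_neg_half_comp_invFun {α₂ α₃ : ℝ≥0 → ℝ≥0}
    (h2 : StrictMono α₂) (hs2 : Surjective α₂) (h3 : Monotone α₃) (hs3 : Surjective α₃)
    {a c w : ℝ≥0} (hwa : w ≤ α₂ a) (hw : α₂ (invFun α₃ (2 * c)) ≤ w) :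
    -(α₃ a : ℝ) + c ≤ -((1 / 2 : ℝ) * (α₃ (invFun α₂ w) : ℝ)) := by
  set q := invFun α₂ w
  have hqa : α₃ q ≤ α₃ a := h3 ((h2.invFun_le_iff hs2).2 hwa)
  have hcq : 2 * c ≤ α₃ q :=
    calc 2 * c = α₃ (invFun α₃ (2 * c)) := (rightInverse_invFun hs3 _).symm
      _ ≤ α₃ q := h3 ((h2.le_invFun_iff hs2).2 hw)
  have hqa' : (α₃ q : ℝ) ≤ α₃ a := by exact_mod_cast hqa
  have hcq' : 2 * (c : ℝ) ≤ α₃ q := by exact_mod_cast hcq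
  linarith

theorem stmt10_general (α₂ α₃ α₄ : ℝ≥0 → ℝ≥0)
    (h2 : ClassKinf α₂) (h3 : ClassKinf α₃)
    (b : ℝ≥0∞) (w a : ℝ → ℝ) (v : ℝ≥0)
    (hwa : ∀ t ∈ {t : ℝ | 0 ≤ t ∧ ENNReal.ofReal t < b},
      w t ≤ (α₂ (Real.toNNReal (a t)) : ℝ))
    (hd : ∀ t ∈ {t : ℝ | 0 ≤ t ∧ ENNReal.ofReal t < b},
      dini w t ≤ ((-(α₃ (Real.toNNReal (a t)) : ℝ) + (α₄ v : ℝ) : ℝ) : EReal)) :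
    ∀ t ∈ {t : ℝ | 0 ≤ t ∧ ENNReal.ofReal t < b},
      (α₂ (Function.invFun α₃ (2 * α₄ v)) : ℝ) ≤ w t →
      dini w t ≤ ((-((1 / 2 : ℝ) *
        (α₃ (Function.invFun α₂ (Real.toNNReal (w t))) : ℝ)) : ℝ) : EReal) := by
  intro t ht hwt
  refine (hd t ht).trans (EReal.coe_le_coe_iff.2 ?_)
  refine neg_add_le_neg_half_comp_invFun h2.1.2.1 h2.surjective h3.1.2.1.monotone
    h3.surjective ?_ ?_
  · exact Real.toNNReal_le_iff_le_coe.2 (hwa t ht)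
  · simpa using Real.toNNReal_mono hwt

theorem stmt10 (α₂ α₃ α₄ : ℝ≥0 → ℝ≥0)
    (h2 : ClassKinf α₂) (h3 : ClassKinf α₃) (h4 : ClassK α₄)
    (b : ℝ≥0∞) (hb : 0 < b) (w a : ℝ → ℝ) (v : ℝ≥0)
    (hw : ContinuousOn w {t : ℝ | 0 ≤ t ∧ ENNReal.ofReal t < b})
    (hwnn : ∀ t ∈ {t : ℝ | 0 ≤ t ∧ ENNReal.ofReal t < b}, 0 ≤ w t)
    (hann : ∀ t ∈ {t : ℝ | 0 ≤ t ∧ ENNReal.ofReal t < b}, 0 ≤ a t)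
    (hwa : ∀ t ∈ {t : ℝ | 0 ≤ t ∧ ENNReal.ofReal t < b},
      w t ≤ (α₂ (Real.toNNReal (a t)) : ℝ))
    (hd : ∀ t ∈ {t : ℝ | 0 ≤ t ∧ ENNReal.ofReal t < b},
      dini w t ≤ ((-(α₃ (Real.toNNReal (a t)) : ℝ) + (α₄ v : ℝ) : ℝ) : EReal)) :
    ∀ t ∈ {t : ℝ | 0 ≤ t ∧ ENNReal.ofReal t < b},
      (α₂ (Function.invFun α₃ (2 * α₄ v)) : ℝ) ≤ w t →
      dini w t ≤ ((-((1 / 2 : ℝ) *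
        (α₃ (Function.invFun α₂ (Real.toNNReal (w t))) : ℝ)) : ℝ) : EReal) :=
  stmt10_general α₂ α₃ α₄ h2 h3 b w a v hwa hd
end

section
/- Let u : ℝ≥0 → ℝᵐ be Lebesgue measurable and locally essentially bounded. Then there exists a sequence (u_k) of right-continuous piecewise-constant functions u_k : ℝ≥0 → ℝᵐ such that for every T > 0, u_k → u in L¹([0,T], ℝᵐ) and sup_k ess sup_{[0,T]} |u_k| < ∞. -/
open Filter Topology Set MeasureTheory
open scoped NNReal ENNReal

/-!
Fix a majorant `ρ t = β ⌊t⌋₊` of `‖u‖`, constant on the unit intervals `[j, j + 1)`. On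
`[0, k + 1]` approximate `u` in `L¹` by a compactly supported continuous `g`; by uniform
continuity, sampling `g` at the left endpoints of a fine enough grid `(1/n) ℕ` moves it uniformly
by little. The approximant `u_k` is this sample, radially retracted onto the ball of radius `ρ t`.
It is bounded by `ρ`, hence uniformly on every `[0, T]`, and it is constant on the grid cells
because they refine the unit intervals. Since `‖u‖ ≤ ρ` almost everywhere, the retraction at most
doubles the distance to `u`, which gives the `L¹` convergence.
-/

/-- A right-continuous piecewise-constant function on `ℝ≥0`: constant on each
right-open interval of a locally finite partition `0 = s 0 < s 1 < ⋯`, `s k → ∞`. -/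
def PCFun {m : ℕ} (f : ℝ → EuclideanSpace ℝ (Fin m)) : Prop :=
  ∃ s : ℕ → ℝ, s 0 = 0 ∧ StrictMono s ∧ Filter.Tendsto s Filter.atTop Filter.atTop ∧
    ∀ k : ℕ, ∀ t ∈ Set.Ico (s k) (s (k + 1)), f t = f (s k)

noncomputable def gridFloor (n : ℕ) (t : ℝ) : ℝ := ⌊t * n⌋₊ / n

lemma floor_gridFloor {n : ℕ} (hn : 0 < n) (t : ℝ) : ⌊gridFloor n t⌋₊ = ⌊t⌋₊ := by
  rw [gridFloor, Nat.floor_div_eq_div, ← Nat.floor_div_natCast,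
    mul_div_cancel_right₀ _ (Nat.cast_ne_zero.mpr hn.ne')]

lemma dist_gridFloor_lt {n : ℕ} (hn : 0 < n) {t : ℝ} (ht : 0 ≤ t) :
    dist (gridFloor n t) t < 1 / n := by
  have hn' : (0 : ℝ) < n := Nat.cast_pos.mpr hn
  have hle : gridFloor n t ≤ t := (div_le_iff₀ hn').mpr (Nat.floor_le (by positivity))
  have hlt : t - 1 / n < gridFloor n t := by
    rw [gridFloor, lt_div_iff₀ hn', sub_mul, one_div_mul_cancel hn'.ne']
    linarith [Nat.lt_floor_add_one (t * n)]
  rw [Real.dist_eq, abs_sub_lt_iff]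
  constructor <;> linarith [one_div_pos.mpr hn']

lemma gridFloor_eq_of_mem_Ico {n j : ℕ} (hn : 0 < n) {t : ℝ}
    (ht : t ∈ Ico (j / n : ℝ) ((j + 1) / n)) : gridFloor n t = j / n := by
  have hn' : (0 : ℝ) < n := Nat.cast_pos.mpr hn
  have ht0 : 0 ≤ t := (by positivity : (0 : ℝ) ≤ j / n).trans ht.1
  rw [gridFloor, (Nat.floor_eq_iff (by positivity)).mpr
    ⟨(div_le_iff₀ hn').mp ht.1, (lt_div_iff₀ hn').mp ht.2⟩]

lemma pcFun_comp_gridFloor {m n : ℕ} (hn : 0 < n) (F : ℝ → EuclideanSpace ℝ (Fin m)) :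
    PCFun fun t => F (gridFloor n t) := by
  have hn' : (0 : ℝ) < n := Nat.cast_pos.mpr hn
  refine ⟨fun j => j / n, by simp, Nat.strictMono_cast.div_const hn',
    tendsto_natCast_atTop_atTop.atTop_div_const hn', fun j t ht => ?_⟩
  have hj : (j : ℝ) / n ∈ Ico (j / n : ℝ) ((j + 1) / n) := ⟨le_rfl, by gcongr; linarith⟩
  push_cast at ht
  simp only [gridFloor_eq_of_mem_Ico hn ht, gridFloor_eq_of_mem_Ico hn hj]

lemma UniformContinuous.exists_dist_comp_gridFloor_lt {α : Type*} [PseudoMetricSpace α]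
    {g : ℝ → α} (hg : UniformContinuous g) {ε : ℝ} (hε : 0 < ε) :
    ∃ n > 0, ∀ t ≥ 0, dist (g (gridFloor n t)) (g t) < ε := by
  obtain ⟨δ, hδ, hgδ⟩ := Metric.uniformContinuous_iff.mp hg ε hε
  obtain ⟨n, hn⟩ := exists_nat_one_div_lt hδ
  refine ⟨n + 1, n.succ_pos, fun t ht => hgδ ((dist_gridFloor_lt n.succ_pos ht).trans ?_)⟩
  exact_mod_cast hn

lemma exists_monotone_bound_floor_ae {φ : ℝ → ℝ}
    (hφ : ∀ T > (0 : ℝ), ∃ M : ℝ, ∀ᵐ t ∂(volume.restrict (Icc 0 T)), φ t ≤ M) :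
    ∃ β : ℕ → ℝ, Monotone β ∧ (∀ j, 0 ≤ β j) ∧ ∀ᵐ t, 0 ≤ t → φ t ≤ β ⌊t⌋₊ := by
  choose M hM using fun j : ℕ => hφ (j + 1) (by positivity)
  have hM' : ∀ j : ℕ, ∀ᵐ t, t ∈ Icc (0 : ℝ) (j + 1) → φ t ≤ M j := fun j =>
    (ae_restrict_iff' measurableSet_Icc).mp (hM j)
  let β := partialSups fun j => max (M j) 0
  have hβ (j : ℕ) : max (M j) 0 ≤ β j := le_partialSups (fun j => max (M j) 0) j
  refine ⟨β, β.monotone, fun j => (le_max_right _ _).trans (hβ j), ?_⟩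
  filter_upwards [ae_all_iff.mpr hM'] with t ht ht0
  exact (ht ⌊t⌋₊ ⟨ht0, (Nat.lt_floor_add_one t).le⟩).trans ((le_max_left _ _).trans (hβ _))

section Approximation

variable {E : Type*} [NormedAddCommGroup E] [NormedSpace ℝ E]

noncomputable def radialRetraction (r : ℝ) (x : E) : E := min 1 (r / ‖x‖) • x

lemma norm_radialRetraction {r : ℝ} (hr : 0 ≤ r) (x : E) :
    ‖radialRetraction r x‖ = min ‖x‖ r := by
  rcases eq_or_ne x 0 with rfl | hx
  · simp [radialRetraction, hr]
  · have hx' : 0 < ‖x‖ := norm_pos_iff.mpr hx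
    rw [radialRetraction, norm_smul, Real.norm_of_nonneg (le_min zero_le_one (by positivity)),
      min_mul_of_nonneg _ _ hx'.le, one_mul, div_mul_cancel₀ _ hx'.ne']

lemma norm_radialRetraction_le {r : ℝ} (hr : 0 ≤ r) (x : E) : ‖radialRetraction r x‖ ≤ r :=
  (norm_radialRetraction hr x).trans_le (min_le_right _ _)

lemma norm_radialRetraction_sub_self {r : ℝ} (hr : 0 ≤ r) (x : E) :
    ‖radialRetraction r x - x‖ = ‖x‖ - min ‖x‖ r := by
  have hc : 0 ≤ min 1 (r / ‖x‖) := le_min zero_le_one (by positivity)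
  have hsub : radialRetraction r x - x = (min 1 (r / ‖x‖) - 1) • x := by
    rw [radialRetraction, sub_smul, one_smul]
  rw [← norm_radialRetraction hr, hsub, radialRetraction, norm_smul, norm_smul,
    Real.norm_of_nonpos (by linarith [min_le_left 1 (r / ‖x‖)]), Real.norm_of_nonneg hc]
  ring

lemma norm_radialRetraction_sub_le {r : ℝ} {x y : E} (hy : ‖y‖ ≤ r) :
    ‖radialRetraction r x - y‖ ≤ 2 * ‖x - y‖ := by
  have hr : 0 ≤ r := (norm_nonneg y).trans hy
  have hexcess : ‖x‖ - min ‖x‖ r ≤ ‖x - y‖ := by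
    rcases min_cases ‖x‖ r with ⟨h, -⟩ | ⟨h, -⟩ <;> rw [h]
    · simp
    · linarith [norm_sub_norm_le x y]
  calc ‖radialRetraction r x - y‖ ≤ ‖radialRetraction r x - x‖ + ‖x - y‖ :=
        norm_sub_le_norm_sub_add_norm_sub _ _ _
    _ ≤ ‖x - y‖ + ‖x - y‖ := by rw [norm_radialRetraction_sub_self hr]; gcongr
    _ = 2 * ‖x - y‖ := by ring

lemma integral_norm_radialRetraction_sub_le {α : Type*} [MeasurableSpace α] {μ : Measure α}
    [IsFiniteMeasure μ] {u G g : α → E} {ρ : α → ℝ} {ε : ℝ} (hu : ∀ᵐ t ∂μ, ‖u t‖ ≤ ρ t)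
    (hG : ∀ᵐ t ∂μ, ‖G t - g t‖ ≤ ε) (hgu : Integrable (fun t => ‖g t - u t‖) μ) :
    ∫ t, ‖radialRetraction (ρ t) (G t) - u t‖ ∂μ ≤ 2 * (μ.real univ * ε + ∫ t, ‖g t - u t‖ ∂μ) :=
  calc ∫ t, ‖radialRetraction (ρ t) (G t) - u t‖ ∂μ ≤ ∫ t, 2 * (ε + ‖g t - u t‖) ∂μ := by
        refine integral_mono_of_nonneg (ae_of_all _ fun _ => norm_nonneg _)
          (((integrable_const ε).add hgu).const_mul 2) ?_
        filter_upwards [hu, hG] with t hut hGt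
        calc ‖radialRetraction (ρ t) (G t) - u t‖ ≤ 2 * ‖G t - u t‖ :=
              norm_radialRetraction_sub_le hut
          _ ≤ 2 * (‖G t - g t‖ + ‖g t - u t‖) := by
              gcongr; exact norm_sub_le_norm_sub_add_norm_sub _ _ _
          _ ≤ 2 * (ε + ‖g t - u t‖) := by gcongr
    _ = 2 * (μ.real univ * ε + ∫ t, ‖g t - u t‖ ∂μ) := by
        rw [integral_const_mul, integral_add (integrable_const _) hgu, integral_const, smul_eq_mul]

lemma MeasureTheory.IntegrableOn.exists_continuous_gridFloor_approx {u : ℝ → E} {R ε : ℝ}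
    (hu : IntegrableOn u (Icc 0 R)) (hε : 0 < ε) :
    ∃ g : ℝ → E, ∃ n > 0, (∀ t ≥ 0, ‖g (gridFloor n t) - g t‖ ≤ ε) ∧
      IntegrableOn (fun t => ‖g t - u t‖) (Icc 0 R) ∧ ∫ t in Icc 0 R, ‖g t - u t‖ ≤ ε := by
  obtain ⟨g, hg_supp, hgu, hg_cont, hg_int⟩ :=
    Integrable.exists_hasCompactSupport_integral_sub_le hu hε
  obtain ⟨n, hn, hgrid⟩ :=
    (hg_supp.uniformContinuous_of_continuous hg_cont).exists_dist_comp_gridFloor_lt hε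
  refine ⟨g, n, hn, fun t ht => by simpa [dist_eq_norm] using (hgrid t ht).le,
    (hg_int.sub hu).norm, ?_⟩
  simpa only [norm_sub_rev] using hgu

lemma intervalIntegral_norm_radialRetraction_gridFloor_sub_le {u g : ℝ → E} {ρ : ℝ → ℝ}
    {n : ℕ} {ε R T : ℝ} (hT : 0 ≤ T) (hTR : T ≤ R) (hu : ∀ᵐ t, 0 ≤ t → ‖u t‖ ≤ ρ t)
    (hgrid : ∀ t ≥ 0, ‖g (gridFloor n t) - g t‖ ≤ ε)
    (hgu : IntegrableOn (fun t => ‖g t - u t‖) (Icc 0 R)) (hL1 : ∫ t in Icc 0 R, ‖g t - u t‖ ≤ ε) :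
    ∫ t in 0..T, ‖radialRetraction (ρ t) (g (gridFloor n t)) - u t‖ ≤ 2 * (T + 1) * ε := by
  have hsub : Ioc 0 T ⊆ Icc 0 R := Ioc_subset_Icc_self.trans (Icc_subset_Icc_right hTR)
  have hmem : ∀ᵐ t ∂(volume.restrict (Ioc 0 T)), t ∈ Ioc 0 T := ae_restrict_mem measurableSet_Ioc
  rw [intervalIntegral.integral_of_le hT]
  calc _ ≤ 2 * ((volume.restrict (Ioc 0 T)).real univ * ε + ∫ t in Ioc 0 T, ‖g t - u t‖) := by
        refine integral_norm_radialRetraction_sub_le ?_ ?_ (hgu.mono_set hsub)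
        · filter_upwards [ae_restrict_of_ae hu, hmem] with t hut ht using hut ht.1.le
        · filter_upwards [hmem] with t ht using hgrid t ht.1.le
    _ ≤ 2 * (T * ε + ε) := by
        rw [measureReal_restrict_apply_univ, Real.volume_real_Ioc_of_le hT, sub_zero]
        gcongr
        exact (setIntegral_mono_set hgu (ae_of_all _ fun _ => norm_nonneg _)
          hsub.eventuallyLE).trans hL1
    _ = 2 * (T + 1) * ε := by ring

end Approximation

theorem stmt14 (m : ℕ) (u : ℝ → EuclideanSpace ℝ (Fin m)) (hu : Measurable u)
    (hub : ∀ T > (0 : ℝ), ∃ M : ℝ, ∀ᵐ t ∂(volume.restrict (Set.Icc 0 T)), ‖u t‖ ≤ M) :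
    ∃ uk : ℕ → ℝ → EuclideanSpace ℝ (Fin m), (∀ k, PCFun (uk k)) ∧
      ∀ T > (0 : ℝ),
        Tendsto (fun k => ∫ t in (0:ℝ)..T, ‖uk k t - u t‖) atTop (𝓝 0) ∧
        ∃ M : ℝ, ∀ k, ∀ᵐ t ∂(volume.restrict (Set.Icc 0 T)), ‖uk k t‖ ≤ M := by
  obtain ⟨β, hβ_mono, hβ_nonneg, hβu⟩ := exists_monotone_bound_floor_ae hub
  have hu_int (k : ℕ) : IntegrableOn u (Icc 0 (k + 1)) := by
    obtain ⟨M, hM⟩ := hub (k + 1) (by positivity)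
    exact Integrable.of_bound hu.aestronglyMeasurable M hM
  choose g n hn hgrid hgu hL1 using fun k : ℕ =>
    (hu_int k).exists_continuous_gridFloor_approx (Nat.one_div_pos_of_nat (n := k))
  refine ⟨fun k t => radialRetraction (β ⌊t⌋₊) (g k (gridFloor (n k) t)), fun k => ?_,
    fun T hT => ⟨?_, β ⌊T⌋₊, fun k => ?_⟩⟩
  · convert pcFun_comp_gridFloor (hn k) fun s => radialRetraction (β ⌊s⌋₊) (g k s) using 3
    rw [floor_gridFloor (hn k)]
  · refine squeeze_zero' (g := fun k : ℕ => 2 * (T + 1) * (1 / ((k : ℝ) + 1)))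
      (Eventually.of_forall fun _ =>
        intervalIntegral.integral_nonneg hT.le fun _ _ => norm_nonneg _)
      ?_ (by simpa using tendsto_one_div_add_atTop_nhds_zero_nat.const_mul (2 * (T + 1)))
    filter_upwards [eventually_ge_atTop ⌈T⌉₊] with k hk
    exact intervalIntegral_norm_radialRetraction_gridFloor_sub_le hT.le
      ((Nat.ceil_le.mp hk).trans (by linarith)) hβu (hgrid k) (hgu k) (hL1 k)
  · filter_upwards [ae_restrict_mem measurableSet_Icc] with t ht
    exact (norm_radialRetraction_le (hβ_nonneg _) _).trans (hβ_mono (Nat.floor_le_floor ht.2))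
end
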